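/- arXiv:2106.14644 — 7 statements merged into one kernel-verified Lean document; each statement's English description precedes it below -/
import Mathlib

section
/- For any matrix X ∈ ℝ^{n×m} with n ≤ m and any γ > 0, ‖X‖_F² ≤ γ^{1-n} · det(X Xᵀ + γ I_n), where ‖·‖_F is the Frobenius norm. -/
open Matrix

lemma one_add_sum_le_prod_aux {ι : Type*} (s : Finset ι) (f : ι → ℝ)
    (hf : ∀ i ∈ s, 0 ≤ f i) :
    1 + ∑ i ∈ s, f i ≤ ∏ i ∈ s, (1 + f i) := by
  classical
  induction s using Finset.induction_on with
  | empty => simp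
  | @insert a s' hx ih =>
    rw [Finset.sum_insert hx, Finset.prod_insert hx]
    have h1 : 0 ≤ f a := hf a (Finset.mem_insert_self a s')
    have h2 : ∀ i ∈ s', 0 ≤ f i := fun i hi => hf i (Finset.mem_insert_of_mem hi)
    have ih' := ih h2
    have hsum : 0 ≤ ∑ i ∈ s', f i := Finset.sum_nonneg h2
    nlinarith [Finset.prod_nonneg (fun i hi => by linarith [h2 i hi] : ∀ i ∈ s', 0 ≤ 1 + f i)]

/-- Frobenius norm bound: `‖X‖_F² ≤ γ^{1-n} det(X Xᵀ + γ I)` for `γ > 0`. -/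
theorem frobenius_sq_le_det {n m : ℕ} (hnm : n ≤ m)
    (X : Matrix (Fin n) (Fin m) ℝ) (γ : ℝ) (hγ : 0 < γ) :
    (∑ i, ∑ j, (X i j) ^ 2)
      ≤ γ ^ ((1 : ℤ) - n) * (X * Xᵀ + γ • (1 : Matrix (Fin n) (Fin n) ℝ)).det := by
  classical
  have hXt : Xᵀ = Xᴴ := by ext i j; simp [conjTranspose_apply]
  have hps : (X * Xᵀ).PosSemidef := by
    rw [hXt]; exact posSemidef_self_mul_conjTranspose X
  have hA : (X * Xᵀ).IsHermitian := hps.isHermitian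
  set μ := hA.eigenvalues with hμdef
  have hμ : ∀ i, 0 ≤ μ i := hps.eigenvalues_nonneg
  set U : Matrix (Fin n) (Fin n) ℝ := (hA.eigenvectorUnitary : Matrix (Fin n) (Fin n) ℝ)
  have hUU : U * star U = 1 := mem_unitaryGroup_iff.mp hA.eigenvectorUnitary.2
  have hUU' : star U * U = 1 := mem_unitaryGroup_iff'.mp hA.eigenvectorUnitary.2
  have hspec : X * Xᵀ = U * diagonal (RCLike.ofReal ∘ μ) * star U := hA.spectral_theorem
  have hdiag : (diagonal (RCLike.ofReal ∘ μ) : Matrix (Fin n) (Fin n) ℝ) = diagonal μ := by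
    congr 1
  -- trace
  have htr : (∑ i, ∑ j, X i j ^ 2) = ∑ i, μ i := by
    have h1 : (X * Xᵀ).trace = ∑ i, μ i := by
      rw [hspec, hdiag, trace_mul_cycle, hUU', one_mul, trace_diagonal]
    rw [← h1]
    simp [Matrix.trace, Matrix.mul_apply, pow_two, diag]
  -- determinant
  have hdet : (X * Xᵀ + γ • (1 : Matrix (Fin n) (Fin n) ℝ)).det = ∏ i, (μ i + γ) := by
    have key : X * Xᵀ + γ • (1 : Matrix (Fin n) (Fin n) ℝ)
        = U * diagonal (fun i => μ i + γ) * star U := by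
      have hd : (diagonal (fun i => μ i + γ) : Matrix (Fin n) (Fin n) ℝ)
          = diagonal μ + γ • 1 := by
        ext i j
        rcases eq_or_ne i j with rfl | h
        · simp
        · simp [h]
      rw [hd, mul_add, add_mul, ← hdiag, ← hspec]
      congr 1
      rw [mul_smul_comm, mul_one, smul_mul_assoc, hUU]
    rw [key, det_mul_right_comm, hUU, one_mul, det_diagonal]
  rw [htr, hdet]
  -- main inequality
  have hprod : ∏ i, (μ i + γ) = γ ^ n * ∏ i : Fin n, (1 + μ i / γ) := by
    have he : ∀ i : Fin n, μ i + γ = γ * (1 + μ i / γ) := fun i => by field_simp; ring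
    simp_rw [he]
    rw [Finset.prod_mul_distrib, Finset.prod_const, Finset.card_univ, Fintype.card_fin]
  rw [hprod]
  have hzp : γ ^ ((1 : ℤ) - n) * (γ ^ n * ∏ i : Fin n, (1 + μ i / γ))
      = γ * ∏ i : Fin n, (1 + μ i / γ) := by
    rw [← mul_assoc]
    congr 1
    rw [← zpow_natCast γ n, ← zpow_add₀ hγ.ne']
    simp
  rw [hzp]
  have hle : 1 + ∑ i : Fin n, μ i / γ ≤ ∏ i : Fin n, (1 + μ i / γ) :=
    one_add_sum_le_prod_aux _ _ (fun i _ => div_nonneg (hμ i) hγ.le)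
  have h2 : γ * (1 + ∑ i : Fin n, μ i / γ) = γ + ∑ i, μ i := by
    rw [mul_add, mul_one, Finset.mul_sum]
    congr 1
    exact Finset.sum_congr rfl fun i _ => by field_simp
  calc ∑ i, μ i ≤ γ + ∑ i, μ i := by linarith
    _ = γ * (1 + ∑ i : Fin n, μ i / γ) := h2.symm
    _ ≤ γ * ∏ i : Fin n, (1 + μ i / γ) := by
        exact mul_le_mul_of_nonneg_left hle hγ.le
end

section
/- If X ∈ ℝ^{n×m} has rank r and X = Z Y with Z ∈ ℝ^{n×r} and Y ∈ ℝ^{r×m}, then det²_r(X) = det²_r(Y) · det²_r(Z). -/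
open Matrix

/-- `det2 k X` is the sum of the squares of all `k × k` minors of `X`. -/
noncomputable def det2 {n m : ℕ} (k : ℕ) (X : Matrix (Fin n) (Fin m) ℝ) : ℝ :=
  ∑ I ∈ Finset.powersetCard k (Finset.univ : Finset (Fin n)),
    ∑ J ∈ Finset.powersetCard k (Finset.univ : Finset (Fin m)),
      if hI : I.card = k then
        if hJ : J.card = k then
          (X.submatrix (fun i => (I.orderIsoOfFin hI i : Fin n))
                       (fun j => (J.orderIsoOfFin hJ j : Fin m))).det ^ 2
        else 0
      else 0

/-- If `X = Z Y` with `Z ∈ ℝ^{n×r}`, `Y ∈ ℝ^{r×m}`, and `rank X = r`, then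
`det2_r(X) = det2_r(Y) · det2_r(Z)`. -/
theorem det2_mul_of_rank {n m r : ℕ}
    (Z : Matrix (Fin n) (Fin r) ℝ) (Y : Matrix (Fin r) (Fin m) ℝ)
    (X : Matrix (Fin n) (Fin m) ℝ) (hX : X = Z * Y) (hr : X.rank = r) :
    det2 r X = det2 r Y * det2 r Z := by
  subst hX
  have hu : (Finset.univ : Finset (Fin r)).card = r := by simp
  have hid : (fun i : Fin r => ((Finset.univ : Finset (Fin r)).orderIsoOfFin hu i : Fin r)) = id := by
    funext i
    rw [Finset.coe_orderIsoOfFin_apply,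
      ← Finset.orderEmbOfFin_unique hu (fun x => Finset.mem_univ x) strictMono_id]
    rfl
  unfold det2
  rw [show Finset.powersetCard r (Finset.univ : Finset (Fin r)) =
      {(Finset.univ : Finset (Fin r))} from by simpa using Finset.powersetCard_self (Finset.univ : Finset (Fin r))]
  simp only [Finset.sum_singleton, dif_pos hu, hid]
  rw [Finset.sum_mul_sum, Finset.sum_comm]
  refine Finset.sum_congr rfl fun J hJmem => Finset.sum_congr rfl fun I hImem => ?_
  have hI : I.card = r := (Finset.mem_powersetCard.1 hImem).2
  have hJ : J.card = r := (Finset.mem_powersetCard.1 hJmem).2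
  rw [dif_pos hI, dif_pos hJ, dif_pos hJ, dif_pos hI,
    Matrix.submatrix_mul _ _ _ id _ Function.bijective_id, Matrix.det_mul, mul_pow, mul_comm]
end

section
/- For X ∈ ℝ^{n×m} with rank r, γ > 0, and W_{γ,X} := (X Xᵀ + γI)⁻¹, we have ‖W_{γ,X}^{1/2} X‖_F² = Σ_{i=1}^r σ_i(X)²/(σ_i(X)² + γ), and consequently ‖W_{γ,X}^{1/2} X‖_F² → rank(X) as γ → 0⁺. -/
/-!
Diagonalize `X Xᵀ = U diag(λ) Uᵀ`. Then `W = (X Xᵀ + γ I)⁻¹ = U diag((λ + γ)⁻¹) Uᵀ`, and since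
`W^{1/2}` is symmetric, `‖W^{1/2} X‖_F² = tr (W X Xᵀ) = ∑ λᵢ / (λᵢ + γ)`. The `λᵢ` are the squared
singular values; sorted decreasingly, exactly the first `rank X = rank (X Xᵀ)` of them are nonzero,
and each nonzero term tends to `1` as `γ → 0⁺`.
-/

open Matrix Filter

lemma isHerm {n m : ℕ} (X : Matrix (Fin n) (Fin m) ℝ) : (X * Xᵀ).IsHermitian := by
  have h : Xᵀ = Xᴴ := by
    ext i j
    simp [Matrix.conjTranspose_apply]
  rw [h]
  exact Matrix.isHermitian_mul_conjTranspose_self X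

open scoped ComplexOrder in
/-- The square root of a positive semidefinite matrix, as defined in the older Mathlib. -/
noncomputable def Matrix.PosSemidef.sqrt {n 𝕜 : Type*} [Fintype n] [DecidableEq n] [RCLike 𝕜]
    {A : Matrix n n 𝕜} (hA : A.PosSemidef) : Matrix n n 𝕜 :=
  hA.1.eigenvectorUnitary.1 * diagonal ((↑) ∘ (Real.sqrt ∘ hA.1.eigenvalues)) *
    (star hA.1.eigenvectorUnitary : Matrix n n 𝕜)

/-- The singular values of `X`, in decreasing order. -/
noncomputable def singval {n m : ℕ} (X : Matrix (Fin n) (Fin m) ℝ) : Fin n → ℝ :=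
  fun i => Real.sqrt
    (((isHerm X).eigenvalues ∘ Tuple.sort ((isHerm X).eigenvalues)) i.rev)

namespace Matrix.PosSemidef

open scoped ComplexOrder

variable {n 𝕜 : Type*} [Fintype n] [DecidableEq n] [RCLike 𝕜] {A : Matrix n n 𝕜}

lemma conjTranspose_sqrt (hA : A.PosSemidef) : hA.sqrtᴴ = hA.sqrt := by
  simp only [sqrt, conjTranspose_mul, diagonal_conjTranspose, Matrix.mul_assoc,
    star_eq_conjTranspose, conjTranspose_conjTranspose]
  congr
  ext i
  simp

lemma sqrt_mul_self (hA : A.PosSemidef) : hA.sqrt * hA.sqrt = A := by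
  set U : Matrix n n 𝕜 := hA.1.eigenvectorUnitary.1
  have hUU : star U * U = 1 := mem_unitaryGroup_iff'.mp hA.1.eigenvectorUnitary.2
  conv_rhs => rw [hA.1.spectral_theorem, Unitary.conjStarAlgAut_apply]
  calc hA.sqrt * hA.sqrt
      = U * (diagonal ((↑) ∘ (Real.sqrt ∘ hA.1.eigenvalues)) * (star U * U) *
          diagonal ((↑) ∘ (Real.sqrt ∘ hA.1.eigenvalues))) * star U := by
        simp only [sqrt, Matrix.mul_assoc]; rfl
    _ = U * diagonal ((↑) ∘ hA.1.eigenvalues) * star U := by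
        rw [hUU, Matrix.mul_one, diagonal_mul_diagonal]
        congr
        ext i
        simp [← RCLike.ofReal_mul, Real.mul_self_sqrt (hA.eigenvalues_nonneg i)]

end Matrix.PosSemidef

lemma Matrix.sum_sum_sq_eq_trace_mul_transpose {m n R : Type*} [Fintype m] [Fintype n]
    [CommSemiring R] (M : Matrix m n R) : ∑ i, ∑ j, M i j ^ 2 = trace (M * Mᵀ) := by
  simp [trace, mul_apply, sq]

lemma Matrix.sum_sum_sq_mul_eq_trace {m n R : Type*} [Fintype m] [Fintype n] [CommSemiring R]
    {S : Matrix m m R} (hS : Sᵀ = S) (X : Matrix m n R) :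
    ∑ i, ∑ j, (S * X) i j ^ 2 = trace (S * S * (X * Xᵀ)) := by
  rw [sum_sum_sq_eq_trace_mul_transpose, transpose_mul, hS, ← Matrix.mul_assoc, trace_mul_comm]
  simp only [Matrix.mul_assoc]

lemma Matrix.IsHermitian.trace_inv_add_smul_one_mul {n : Type*} [Fintype n] [DecidableEq n]
    {A : Matrix n n ℝ} (hA : A.IsHermitian) {γ : ℝ} (hγ : ∀ i, hA.eigenvalues i + γ ≠ 0) :
    trace ((A + γ • 1)⁻¹ * A) = ∑ i, hA.eigenvalues i / (hA.eigenvalues i + γ) := by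
  set e := hA.eigenvalues
  set conj := Unitary.conjStarAlgAut ℝ (Matrix n n ℝ) hA.eigenvectorUnitary
  have hA' : A = conj (diagonal e) := by
    simpa only [RCLike.ofReal_real_eq_id, Function.id_comp] using hA.spectral_theorem
  have hshift : A + γ • 1 = conj (diagonal fun i => e i + γ) := by
    rw [← diagonal_add, ← smul_one_eq_diagonal, map_add, map_smul, map_one, ← hA']
  have hinv : (A + γ • 1)⁻¹ = conj (diagonal fun i => (e i + γ)⁻¹) := by
    refine inv_eq_left_inv ?_
    rw [hshift, ← map_mul, diagonal_mul_diagonal]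
    simp [inv_mul_cancel₀ (hγ _)]
  have htrace (M : Matrix n n ℝ) : trace (conj M) = trace M := by
    simp [conj, trace_mul_cycle]
  nth_rw 2 [hA']
  rw [hinv, ← map_mul, diagonal_mul_diagonal, htrace, trace_diagonal]
  simp [div_eq_inv_mul]

lemma Matrix.posSemidef_self_mul_transpose {m n : Type*} [Fintype m] [Fintype n]
    (X : Matrix m n ℝ) : (X * Xᵀ).PosSemidef := by
  simpa using posSemidef_self_mul_conjTranspose X

lemma Fin.iff_lt_card_filter_of_antitone {n : ℕ} {p : Fin n → Prop} [DecidablePred p]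
    (hp : ∀ ⦃i j⦄, i ≤ j → p j → p i) (i : Fin n) :
    p i ↔ (i : ℕ) < (Finset.univ.filter p).card := by
  constructor
  · intro hi
    have hsub : Finset.Iic i ⊆ Finset.univ.filter p := fun j hj =>
      Finset.mem_filter.mpr ⟨Finset.mem_univ j, hp (Finset.mem_Iic.mp hj) hi⟩
    simpa using Finset.card_le_card hsub
  · intro hlt
    by_contra hi
    have hsub : Finset.univ.filter p ⊆ Finset.Iio i := fun j hj => by
      simpa using fun hij : i ≤ j => hi (hp hij (Finset.mem_filter.mp hj).2)
    simpa using hlt.trans_le (Finset.card_le_card hsub)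

section SingularValues

variable {n m : ℕ} (X : Matrix (Fin n) (Fin m) ℝ)

/-- The permutation listing the eigenvalues of `X * Xᵀ` in decreasing order, so that
`singval X i` is the square root of the eigenvalue at `sortEigenPerm X i` by definition. -/
noncomputable def sortEigenPerm : Equiv.Perm (Fin n) :=
  Fin.revPerm.trans (Tuple.sort (isHerm X).eigenvalues)

lemma singval_sq (i : Fin n) :
    singval X i ^ 2 = (isHerm X).eigenvalues (sortEigenPerm X i) :=
  Real.sq_sqrt ((posSemidef_self_mul_transpose X).eigenvalues_nonneg _)

lemma singval_antitone : Antitone (singval X) := fun _ _ hij =>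
  Real.sqrt_le_sqrt (Tuple.monotone_sort _ (Fin.rev_le_rev.mpr hij))

lemma sum_eigenvalues_eq_sum_singval_sq (f : ℝ → ℝ) :
    ∑ i, f ((isHerm X).eigenvalues i) = ∑ i, f (singval X i ^ 2) := by
  simp only [singval_sq]
  exact (Equiv.sum_comp (sortEigenPerm X) _).symm

lemma card_singval_ne_zero : (Finset.univ.filter fun i => singval X i ≠ 0).card = X.rank := by
  rw [← rank_self_mul_transpose, (isHerm X).rank_eq_card_non_zero_eigs, ← Fintype.card_subtype]
  refine Fintype.card_congr (Equiv.subtypeEquiv (sortEigenPerm X) fun i => ?_)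
  exact not_congr (Real.sqrt_eq_zero ((posSemidef_self_mul_transpose X).eigenvalues_nonneg _))

lemma singval_ne_zero_iff (i : Fin n) : singval X i ≠ 0 ↔ (i : ℕ) < X.rank := by
  rw [← card_singval_ne_zero]
  refine Fin.iff_lt_card_filter_of_antitone (p := fun i => singval X i ≠ 0)
    (fun i j hij hj => ?_) i
  exact ((Real.sqrt_nonneg _).lt_of_ne' hj |>.trans_le (singval_antitone X hij)).ne'

end SingularValues

lemma tendsto_div_add_nhdsGT_zero {a : ℝ} (ha : a ≠ 0) :
    Tendsto (fun γ : ℝ => a / (a + γ)) (nhdsWithin 0 (Set.Ioi 0)) (nhds 1) := by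
  have hcont : ContinuousAt (fun γ : ℝ => a / (a + γ)) 0 :=
    continuousAt_const.div (continuousAt_const.add continuousAt_id) (by simpa using ha)
  simpa [ha] using hcont.tendsto.mono_left nhdsWithin_le_nhds

theorem weighted_frobenius_eq_and_tendsto_rank_general {n m : ℕ}
    (X : Matrix (Fin n) (Fin m) ℝ) :
    (∀ γ : ℝ, 0 < γ →
      ∀ h : ((X * Xᵀ + γ • (1 : Matrix (Fin n) (Fin n) ℝ))⁻¹).PosSemidef,
        (∑ i, ∑ j, ((h.sqrt * X) i j) ^ 2)
          = ∑ i ∈ Finset.univ.filter (fun i : Fin n => (i : ℕ) < X.rank),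
              singval X i ^ 2 / (singval X i ^ 2 + γ)) ∧
    Tendsto
      (fun γ : ℝ =>
        ∑ i ∈ Finset.univ.filter (fun i : Fin n => (i : ℕ) < X.rank),
          singval X i ^ 2 / (singval X i ^ 2 + γ))
      (nhdsWithin 0 (Set.Ioi 0)) (nhds (X.rank : ℝ)) := by
  have hsq_ne_zero (i : Fin n) : singval X i ^ 2 ≠ 0 ↔ (i : ℕ) < X.rank := by
    rw [pow_ne_zero_iff two_ne_zero, singval_ne_zero_iff]
  constructor
  · intro γ hγ h
    have hshift_ne_zero (i : Fin n) : (isHerm X).eigenvalues i + γ ≠ 0 :=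
      (add_pos_of_nonneg_of_pos ((posSemidef_self_mul_transpose X).eigenvalues_nonneg i) hγ).ne'
    rw [sum_sum_sq_mul_eq_trace (by simpa using h.conjTranspose_sqrt), h.sqrt_mul_self,
      (isHerm X).trace_inv_add_smul_one_mul hshift_ne_zero,
      sum_eigenvalues_eq_sum_singval_sq X fun t => t / (t + γ)]
    refine (Finset.sum_filter_of_ne fun i _ hi => ?_).symm
    exact (hsq_ne_zero i).mp (left_ne_zero_of_mul (by simpa [div_eq_mul_inv] using hi))
  · have hcard : ((Finset.univ.filter fun i : Fin n => (i : ℕ) < X.rank).card : ℝ) = X.rank := by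
      rw [Finset.filter_congr fun i _ => (singval_ne_zero_iff X i).symm, card_singval_ne_zero]
    rw [← hcard, Finset.card_eq_sum_ones, Nat.cast_sum, Nat.cast_one]
    refine tendsto_finsetSum _ fun i hi => tendsto_div_add_nhdsGT_zero ?_
    exact (hsq_ne_zero i).mpr (Finset.mem_filter.mp hi).2

/-- For `W_{γ,X} = (X Xᵀ + γI)⁻¹` one has
`‖W_{γ,X}^{1/2} X‖_F² = ∑_{i=1}^r σ_i²/(σ_i² + γ)` where `r = rank X`, and this
quantity tends to `rank X` as `γ → 0⁺`. -/
theorem weighted_frobenius_eq_and_tendsto_rank {n m : ℕ} (hnm : n ≤ m)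
    (X : Matrix (Fin n) (Fin m) ℝ) :
    (∀ γ : ℝ, 0 < γ →
      ∀ h : ((X * Xᵀ + γ • (1 : Matrix (Fin n) (Fin n) ℝ))⁻¹).PosSemidef,
        (∑ i, ∑ j, ((h.sqrt * X) i j) ^ 2)
          = ∑ i ∈ Finset.univ.filter (fun i : Fin n => (i : ℕ) < X.rank),
              singval X i ^ 2 / (singval X i ^ 2 + γ)) ∧
    Tendsto
      (fun γ : ℝ =>
        ∑ i ∈ Finset.univ.filter (fun i : Fin n => (i : ℕ) < X.rank),
          singval X i ^ 2 / (singval X i ^ 2 + γ))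
      (nhdsWithin 0 (Set.Ioi 0)) (nhds (X.rank : ℝ)) :=
  weighted_frobenius_eq_and_tendsto_rank_general X
end

section
/- Let L : ℝ^{n×m} → ℝ^ℓ be linear, y ∈ image(L), and r = min{rank(X) : L(X) = y}. For γ > 0 let X_γ be a global minimizer of f_γ(X) = log det(X Xᵀ + γI) over {X : L(X) = y}. If X_γ converges as γ → 0⁺, then the limit X̄ satisfies rank(X̄) = r and X̄ minimizes Π_{i=1}^r σ_i(X) over all rank-r matrices X with L(X) = y; moreover σ_{r+1}(X_γ)² = O(γ). -/
/-!
Write `ν_i = σ_i²` for the eigenvalues of `X Xᵀ` in decreasing order, so that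
`det (X Xᵀ + γ I) = ∏ (ν_i + γ) = ∑_k e_k(ν) γ^(n-k)` with nonnegative elementary symmetric
functions `e_k`. Comparing the minimizer `X_γ` with a rank-`r` solution `X₀`, whose determinant
is `∏_{i<r} (ν_i(X₀) + γ) · γ^(n-r)`, gives `e_r(ν(X_γ)) ≤ ∏_{i<r} (ν_i(X₀) + γ)` and
`e_{r+1}(ν(X_γ)) ≤ γ ∏_{i<r} (ν_i(X₀) + γ)`. The `e_k(ν(X))` are continuous in `X`, being the
coefficients of a polynomial of bounded degree whose values are the determinants above. In the
limit, `e_{r+1}(ν(X̄)) = 0`, so `rank X̄ ≤ r`, and `∏_{i<r} ν_i(X̄) ≤ e_r(ν(X̄)) ≤ ∏_{i<r} ν_i(X₀)`.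
Finally `ν_r e_r ≤ C(n, r) e_{r+1}`, and `e_r(ν(X_γ))` stays away from `0`, so `ν_r(X_γ) = O(γ)`.
-/

open Matrix Filter

/-- `f_γ(X) = log det(X Xᵀ + γ I)`. -/
noncomputable def fgamma {n m : ℕ} (γ : ℝ) (X : Matrix (Fin n) (Fin m) ℝ) : ℝ :=
  Real.log (X * Xᵀ + γ • (1 : Matrix (Fin n) (Fin n) ℝ)).det

open Finset Topology

theorem Polynomial.continuous_coeff_of_continuous_eval {K α : Type*} [Field K] [CharZero K]
    [TopologicalSpace K] [IsTopologicalRing K] [TopologicalSpace α] {p : α → Polynomial K}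
    {d : ℕ} (hdeg : ∀ a, (p a).degree < d) (hp : ∀ t, Continuous fun a ↦ (p a).eval t) (j : ℕ) :
    Continuous fun a ↦ (p a).coeff j := by
  have hinj : Set.InjOn (Nat.cast : ℕ → K) (range d) := fun a _ b _ h ↦ Nat.cast_injective h
  have hp_eq (a : α) : (p a).coeff j = ∑ i ∈ range d,
      (p a).eval (i : K) * (Lagrange.basis (range d) Nat.cast i).coeff j := by
    conv_lhs => rw [Lagrange.eq_interpolate hinj (f := p a) (by simpa using hdeg a)]
    simp [Lagrange.interpolate_apply]
  simp_rw [hp_eq]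
  fun_prop

theorem Matrix.IsHermitian.det_add_smul_one {ι : Type*} [Fintype ι] [DecidableEq ι]
    {A : Matrix ι ι ℝ} (hA : A.IsHermitian) (t : ℝ) :
    (A + t • 1).det = ∏ i, (hA.eigenvalues i + t) := by
  have h := A.eval_charpoly (-t)
  rw [hA.charpoly_eq, Polynomial.eval_prod] at h
  have hneg : scalar ι (-t) - A = -(A + t • 1) := by
    rw [scalar_apply, neg_add, ← neg_smul, smul_one_eq_diagonal]; abel
  simp only [Polynomial.eval_sub, Polynomial.eval_X, Polynomial.eval_C, RCLike.ofReal_real_eq_id,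
    id, hneg, det_neg] at h
  have h2 : ∏ i, (-t - hA.eigenvalues i) =
      (-1) ^ Fintype.card ι * ∏ i, (hA.eigenvalues i + t) := by
    rw [← card_univ, ← prod_const, ← prod_mul_distrib]
    exact prod_congr rfl fun i _ ↦ by ring
  rw [h2] at h
  exact (mul_left_cancel₀ (pow_ne_zero _ (by norm_num)) h).symm

theorem esymm_mul_pow_le_prod_add {ι : Type*} [Fintype ι] {ν : ι → ℝ} (hν : ∀ i, 0 ≤ ν i) {t : ℝ} (ht : 0 ≤ t) (k : ℕ) :
    (univ.val.map ν).esymm k * t ^ (Fintype.card ι - k) ≤ ∏ i, (ν i + t) := by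
  classical
  rw [Finset.esymm_map_val, sum_mul, prod_add]
  refine (sum_congr rfl fun s hs ↦ ?_).trans_le
    (sum_le_sum_of_subset_of_nonneg (fun s hs ↦ mem_powerset.2 (mem_powersetCard.1 hs).1)
      fun s _ _ ↦ mul_nonneg (prod_nonneg fun i _ ↦ hν i) (prod_nonneg fun _ _ ↦ ht))
  rw [prod_const, ← compl_eq_univ_sdiff, card_compl, (mem_powersetCard.1 hs).2]

theorem Fin.val_le_of_strictMono {k n : ℕ} {f : Fin k → Fin n} (hf : StrictMono f) (j : Fin k) :
    (j : ℕ) ≤ f j := by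
  obtain ⟨j, hj⟩ := j
  induction j with
  | zero => exact Nat.zero_le _
  | succ j ih =>
    have hlt : f ⟨j, by omega⟩ < f ⟨j + 1, hj⟩ := hf (Fin.mk_lt_mk.2 j.lt_succ_self)
    exact (ih (by omega)).trans_lt hlt

theorem Fin.filter_val_lt_eq_map {n k : ℕ} (hk : k ≤ n) :
    ({i : Fin n | (i : ℕ) < k} : Finset (Fin n)) = univ.map (Fin.castLEEmb hk) := by
  ext i
  simp only [mem_filter, mem_univ, true_and, Finset.mem_map, Fin.coe_castLEEmb]
  exact ⟨fun hi ↦ ⟨⟨i, hi⟩, rfl⟩, by rintro ⟨j, rfl⟩; exact j.2⟩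

section Antitone

variable {n : ℕ} {ν : Fin n → ℝ}

theorem Antitone.ne_zero_iff_lt_card (hν : Antitone ν) (h0 : ∀ i, 0 ≤ ν i) (i : Fin n) :
    ν i ≠ 0 ↔ (i : ℕ) < #{j | ν j ≠ 0} := by
  constructor
  · intro hi
    have hsub : Iic i ⊆ ({j | ν j ≠ 0} : Finset (Fin n)) := fun j hj ↦ by
      simp only [mem_filter, mem_univ, true_and]
      exact ((lt_of_le_of_ne (h0 i) hi.symm).trans_le (hν (mem_Iic.1 hj))).ne'
    simpa [Fin.card_Iic] using card_le_card hsub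
  · intro hi h
    have hsub : ({j | ν j ≠ 0} : Finset (Fin n)) ⊆ Iio i := fun j hj ↦ by
      simp only [mem_filter, mem_univ, true_and] at hj
      exact mem_Iio.2 (lt_of_not_ge fun hij ↦ hj ((hν hij).trans h.le |>.antisymm (h0 j)))
    simpa [Fin.card_Iio] using (card_le_card hsub).trans_lt' hi

theorem Antitone.prod_le_prod_filter_val_lt (hν : Antitone ν) (h0 : ∀ i, 0 ≤ ν i)
    {S : Finset (Fin n)} {k : ℕ} (hS : #S = k) :
    ∏ i ∈ S, ν i ≤ ∏ i ∈ {i : Fin n | (i : ℕ) < k}, ν i := by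
  have hk : k ≤ n := hS ▸ (card_le_univ S).trans_eq (Fintype.card_fin n)
  rw [← S.map_orderEmbOfFin_univ hS, Fin.filter_val_lt_eq_map hk, prod_map, prod_map]
  exact prod_le_prod (fun _ _ ↦ h0 _) fun j _ ↦
    hν (Fin.le_def.2 (Fin.val_le_of_strictMono (S.orderEmbOfFin hS).strictMono j))

theorem prod_filter_val_lt_le_esymm (h0 : ∀ i, 0 ≤ ν i) {k : ℕ} (hk : k ≤ n) :
    ∏ i ∈ {i : Fin n | (i : ℕ) < k}, ν i ≤ (univ.val.map ν).esymm k := by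
  rw [Finset.esymm_map_val]
  exact single_le_sum (f := fun S ↦ ∏ i ∈ S, ν i) (fun S _ ↦ prod_nonneg fun i _ ↦ h0 i)
    (mem_powersetCard.2 ⟨subset_univ _, Fin.card_filter_val_lt.trans (min_eq_right hk)⟩)

theorem Antitone.esymm_le_choose_mul_prod_filter_val_lt (hν : Antitone ν) (h0 : ∀ i, 0 ≤ ν i)
    (k : ℕ) : (univ.val.map ν).esymm k ≤ n.choose k * ∏ i ∈ {i : Fin n | (i : ℕ) < k}, ν i := by
  rw [Finset.esymm_map_val]
  refine (sum_le_card_nsmul _ _ _ fun S hS ↦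
    hν.prod_le_prod_filter_val_lt h0 (mem_powersetCard.1 hS).2).trans_eq ?_
  simp

theorem Antitone.mul_esymm_le_choose_mul_esymm_succ (hν : Antitone ν) (h0 : ∀ i, 0 ≤ ν i)
    {r : ℕ} (hr : r < n) :
    ν ⟨r, hr⟩ * (univ.val.map ν).esymm r ≤ n.choose r * (univ.val.map ν).esymm (r + 1) := by
  have hinsert : univ.filter (fun i : Fin n ↦ (i : ℕ) < r + 1) =
      insert ⟨r, hr⟩ (univ.filter fun i : Fin n ↦ (i : ℕ) < r) := by
    ext i
    simp only [Order.lt_add_one_iff, mem_filter, mem_univ, true_and, mem_insert, Fin.ext_iff]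
    omega
  calc ν ⟨r, hr⟩ * (univ.val.map ν).esymm r
      ≤ ν ⟨r, hr⟩ * (n.choose r * ∏ i ∈ {i : Fin n | (i : ℕ) < r}, ν i) :=
        mul_le_mul_of_nonneg_left (hν.esymm_le_choose_mul_prod_filter_val_lt h0 r) (h0 _)
    _ = n.choose r * ∏ i ∈ {i : Fin n | (i : ℕ) < r + 1}, ν i := by
        rw [hinsert, prod_insert (by simp)]; ring
    _ ≤ n.choose r * (univ.val.map ν).esymm (r + 1) :=
        mul_le_mul_of_nonneg_left (prod_filter_val_lt_le_esymm h0 hr) (by positivity)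

end Antitone

namespace Matrix

variable {n m : ℕ}

noncomputable def sqSingval (X : Matrix (Fin n) (Fin m) ℝ) (i : Fin n) : ℝ :=
  (isHerm X).eigenvalues (Tuple.sort (isHerm X).eigenvalues i.rev)

theorem singval_eq_sqrt_sqSingval (X : Matrix (Fin n) (Fin m) ℝ) (i : Fin n) :
    singval X i = √(sqSingval X i) := rfl

theorem sqSingval_nonneg (X : Matrix (Fin n) (Fin m) ℝ) (i : Fin n) : 0 ≤ sqSingval X i := by
  have hX : (X * Xᵀ).PosSemidef := by
    simpa using posSemidef_self_mul_conjTranspose X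
  exact hX.eigenvalues_nonneg _

theorem sqSingval_antitone (X : Matrix (Fin n) (Fin m) ℝ) : Antitone (sqSingval X) :=
  fun _ _ hij ↦ Tuple.monotone_sort _ (Fin.rev_le_rev.2 hij)

theorem det_mul_transpose_add_smul_one (X : Matrix (Fin n) (Fin m) ℝ) (t : ℝ) :
    (X * Xᵀ + t • 1).det = ∏ i, (sqSingval X i + t) := by
  rw [(isHerm X).det_add_smul_one]
  exact (((Fin.revPerm).trans (Tuple.sort (isHerm X).eigenvalues)).prod_comp
    fun i ↦ (isHerm X).eigenvalues i + t).symm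

theorem sqSingval_ne_zero_iff (X : Matrix (Fin n) (Fin m) ℝ) (i : Fin n) :
    sqSingval X i ≠ 0 ↔ (i : ℕ) < X.rank := by
  have hrank : X.rank = #{j | sqSingval X j ≠ 0} := by
    rw [← Fintype.card_subtype, ← rank_self_mul_transpose, (isHerm X).rank_eq_card_non_zero_eigs]
    exact Fintype.card_congr (((Fin.revPerm).trans (Tuple.sort (isHerm X).eigenvalues)).subtypeEquiv
      (p := fun i ↦ sqSingval X i ≠ 0) (q := fun j ↦ (isHerm X).eigenvalues j ≠ 0)
      fun _ ↦ Iff.rfl).symm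
  rw [hrank]
  exact (sqSingval_antitone X).ne_zero_iff_lt_card (sqSingval_nonneg X) i

theorem esymm_sqSingval_pos (X : Matrix (Fin n) (Fin m) ℝ) {k : ℕ} (hk : k ≤ X.rank) :
    0 < (univ.val.map (sqSingval X)).esymm k :=
  (prod_pos fun i hi ↦ (sqSingval_nonneg X i).lt_of_ne' <| (sqSingval_ne_zero_iff X i).2 <|
    (mem_filter.1 hi).2.trans_le hk).trans_le
    (prod_filter_val_lt_le_esymm (sqSingval_nonneg X) (hk.trans X.rank_le_height))

theorem continuous_esymm_sqSingval {k : ℕ} (hk : k ≤ n) :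
    Continuous fun X : Matrix (Fin n) (Fin m) ℝ ↦ (univ.val.map (sqSingval X)).esymm k := by
  have hcoeff (X : Matrix (Fin n) (Fin m) ℝ) : (univ.val.map (sqSingval X)).esymm k =
      (∏ i, (Polynomial.X + Polynomial.C (sqSingval X i))).coeff (n - k) := by
    rw [Finset.prod_X_add_C_coeff _ _ (by simp), Finset.esymm_map_val, card_univ,
      Fintype.card_fin, Nat.sub_sub_self hk]
  simp_rw [hcoeff]
  refine Polynomial.continuous_coeff_of_continuous_eval (d := n + 1) (fun X ↦ ?_) (fun t ↦ ?_) _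
  · refine (Polynomial.degree_le_natDegree).trans_lt ?_
    rw [Polynomial.natDegree_prod_of_monic _ _ fun i _ ↦ Polynomial.monic_X_add_C _]
    simp only [Polynomial.natDegree_X_add_C, sum_const, card_univ, Fintype.card_fin, smul_eq_mul,
      mul_one]
    exact_mod_cast n.lt_succ_self
  · simp_rw [Polynomial.eval_prod, Polynomial.eval_add, Polynomial.eval_X, Polynomial.eval_C,
      add_comm t, ← det_mul_transpose_add_smul_one]
    fun_prop

end Matrix

section LogDetMinimizers

variable {n m : ℕ}

theorem fgamma_eq_log_prod (γ : ℝ) (X : Matrix (Fin n) (Fin m) ℝ) :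
    fgamma γ X = Real.log (∏ i, (sqSingval X i + γ)) := by
  rw [fgamma, det_mul_transpose_add_smul_one]

theorem prod_sqSingval_add_le_of_fgamma_le {γ : ℝ} (hγ : 0 < γ) {Z X : Matrix (Fin n) (Fin m) ℝ}
    (h : fgamma γ Z ≤ fgamma γ X) : ∏ i, (sqSingval Z i + γ) ≤ ∏ i, (sqSingval X i + γ) := by
  have hpos (Y : Matrix (Fin n) (Fin m) ℝ) : 0 < ∏ i, (sqSingval Y i + γ) :=
    prod_pos fun i _ ↦ by linarith [sqSingval_nonneg Y i]
  rwa [fgamma_eq_log_prod, fgamma_eq_log_prod, Real.log_le_log_iff (hpos Z) (hpos X)] at h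

theorem prod_sqSingval_add_of_rank_eq {X : Matrix (Fin n) (Fin m) ℝ} {r : ℕ} (hX : X.rank = r)
    (t : ℝ) : ∏ i, (sqSingval X i + t) =
      (∏ i ∈ {i : Fin n | (i : ℕ) < r}, (sqSingval X i + t)) * t ^ (n - r) := by
  have hr : r ≤ n := hX ▸ X.rank_le_height
  have hcard : #{i : Fin n | ¬(i : ℕ) < r} = n - r := by
    have := card_filter_add_card_filter_not (s := univ) (fun i : Fin n ↦ (i : ℕ) < r)
    rw [Fin.card_filter_val_lt, min_eq_right hr, card_univ, Fintype.card_fin] at this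
    omega
  rw [← prod_filter_mul_prod_filter_not univ (fun i : Fin n ↦ (i : ℕ) < r), ← hcard, ← prod_const]
  refine congrArg _ (prod_congr rfl fun i hi ↦ ?_)
  rw [not_ne_iff.1 (mt (sqSingval_ne_zero_iff X i).1 (by simpa [hX] using hi)), zero_add]

theorem esymm_mul_pow_le_of_fgamma_le {γ : ℝ} (hγ : 0 < γ) {Z X : Matrix (Fin n) (Fin m) ℝ}
    {r : ℕ} (hX : X.rank = r) (h : fgamma γ Z ≤ fgamma γ X) (k : ℕ) :
    (univ.val.map (sqSingval Z)).esymm k * γ ^ (n - k) ≤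
      (∏ i ∈ {i : Fin n | (i : ℕ) < r}, (sqSingval X i + γ)) * γ ^ (n - r) := by
  have := esymm_mul_pow_le_prod_add (sqSingval_nonneg Z) hγ.le k
  rw [Fintype.card_fin] at this
  exact this.trans ((prod_sqSingval_add_le_of_fgamma_le hγ h).trans_eq
    (prod_sqSingval_add_of_rank_eq hX γ))

end LogDetMinimizers

section LimitOfMinimizers

variable {n m r : ℕ} {Z : ℝ → Matrix (Fin n) (Fin m) ℝ} {Zbar X : Matrix (Fin n) (Fin m) ℝ}

theorem tendsto_prod_sqSingval_add (X : Matrix (Fin n) (Fin m) ℝ) (s : Finset (Fin n)) :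
    Tendsto (fun γ ↦ ∏ i ∈ s, (sqSingval X i + γ)) (𝓝[>] 0) (𝓝 (∏ i ∈ s, sqSingval X i)) := by
  have h : Continuous fun γ : ℝ ↦ ∏ i ∈ s, (sqSingval X i + γ) := by fun_prop
  simpa using (h.tendsto 0).mono_left nhdsWithin_le_nhds

theorem esymm_le_of_fgamma_le (hX : X.rank = r) {γ : ℝ} (hγ : 0 < γ)
    (h : fgamma γ (Z γ) ≤ fgamma γ X) :
    (univ.val.map (sqSingval (Z γ))).esymm r ≤
      ∏ i ∈ {i : Fin n | (i : ℕ) < r}, (sqSingval X i + γ) :=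
  le_of_mul_le_mul_right (esymm_mul_pow_le_of_fgamma_le hγ hX h r) (pow_pos hγ _)

theorem esymm_succ_le_of_fgamma_le (hX : X.rank = r) (hr : r < n) {γ : ℝ} (hγ : 0 < γ)
    (h : fgamma γ (Z γ) ≤ fgamma γ X) :
    (univ.val.map (sqSingval (Z γ))).esymm (r + 1) ≤
      γ * ∏ i ∈ {i : Fin n | (i : ℕ) < r}, (sqSingval X i + γ) := by
  refine le_of_mul_le_mul_right ?_ (pow_pos hγ (n - (r + 1)))
  have hpow : γ ^ (n - r) = γ * γ ^ (n - (r + 1)) := by rw [← pow_succ']; congr 1; omega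
  simpa [hpow, mul_assoc, mul_left_comm] using esymm_mul_pow_le_of_fgamma_le hγ hX h (r + 1)

variable (hZ : ∀ γ, 0 < γ → fgamma γ (Z γ) ≤ fgamma γ X) (hlim : Tendsto Z (𝓝[>] 0) (𝓝 Zbar))
include hZ hlim

theorem esymm_limit_le (hX : X.rank = r) :
    (univ.val.map (sqSingval Zbar)).esymm r ≤ ∏ i ∈ {i : Fin n | (i : ℕ) < r}, sqSingval X i := by
  have hr : r ≤ n := hX ▸ X.rank_le_height
  refine le_of_tendsto_of_tendsto (((continuous_esymm_sqSingval hr).tendsto Zbar).comp hlim)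
    (tendsto_prod_sqSingval_add X _) ?_
  filter_upwards [self_mem_nhdsWithin] with γ hγ
  exact esymm_le_of_fgamma_le hX hγ (hZ γ hγ)

theorem prod_singval_limit_le (hX : X.rank = r) :
    ∏ i ∈ {i : Fin n | (i : ℕ) < r}, singval Zbar i ≤
      ∏ i ∈ {i : Fin n | (i : ℕ) < r}, singval X i := by
  simp only [singval_eq_sqrt_sqSingval]
  rw [← Real.sqrt_prod _ fun i _ ↦ sqSingval_nonneg Zbar i,
    ← Real.sqrt_prod _ fun i _ ↦ sqSingval_nonneg X i]
  exact Real.sqrt_le_sqrt ((prod_filter_val_lt_le_esymm (sqSingval_nonneg Zbar)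
    (hX ▸ X.rank_le_height)).trans (esymm_limit_le hZ hlim hX))

theorem rank_limit_le (hX : X.rank = r) : Zbar.rank ≤ r := by
  rcases le_or_gt n r with hnr | hr
  · exact Zbar.rank_le_height.trans hnr
  by_contra! hrank
  have hlim0 : Tendsto (fun γ ↦ γ * ∏ i ∈ {i : Fin n | (i : ℕ) < r}, (sqSingval X i + γ))
      (𝓝[>] 0) (𝓝 0) := by
    simpa using (tendsto_nhdsWithin_of_tendsto_nhds tendsto_id).mul (tendsto_prod_sqSingval_add X _)
  have hle : (univ.val.map (sqSingval Zbar)).esymm (r + 1) ≤ 0 := by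
    refine le_of_tendsto_of_tendsto (((continuous_esymm_sqSingval hr).tendsto Zbar).comp hlim)
      hlim0 ?_
    filter_upwards [self_mem_nhdsWithin] with γ hγ
    exact esymm_succ_le_of_fgamma_le hX hr hγ (hZ γ hγ)
  exact hle.not_gt (esymm_sqSingval_pos Zbar hrank)

theorem sqSingval_isBigO_of_tendsto (hX : X.rank = r) (hr : r < n) (hrank : r ≤ Zbar.rank) :
    (fun γ ↦ sqSingval (Z γ) ⟨r, hr⟩) =O[𝓝[>] 0] fun γ ↦ γ := by
  set c := (univ.val.map (sqSingval Zbar)).esymm r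
  have hc : 0 < c := esymm_sqSingval_pos Zbar hrank
  have hev : ∀ᶠ γ in 𝓝[>] 0, c / 2 ≤ (univ.val.map (sqSingval (Z γ))).esymm r :=
    (((continuous_esymm_sqSingval hr.le).tendsto Zbar).comp hlim).eventually
      (eventually_ge_nhds (half_lt_self hc))
  have hbound : (fun γ ↦ sqSingval (Z γ) ⟨r, hr⟩) =O[𝓝[>] 0]
      fun γ ↦ γ * ∏ i ∈ {i : Fin n | (i : ℕ) < r}, (sqSingval X i + γ) := by
    refine .of_bound (2 * n.choose r / c) ?_
    filter_upwards [hev, self_mem_nhdsWithin] with γ hγc hγ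
    have hν := (sqSingval_antitone (Z γ)).mul_esymm_le_choose_mul_esymm_succ
      (sqSingval_nonneg (Z γ)) hr
    have he := esymm_succ_le_of_fgamma_le hX hr hγ (hZ γ hγ)
    have hν0 := sqSingval_nonneg (Z γ) ⟨r, hr⟩
    rw [Real.norm_of_nonneg hν0, div_mul_eq_mul_div, le_div_iff₀ hc]
    calc sqSingval (Z γ) ⟨r, hr⟩ * c
        ≤ 2 * (sqSingval (Z γ) ⟨r, hr⟩ * (univ.val.map (sqSingval (Z γ))).esymm r) := by
          nlinarith
      _ ≤ 2 * (n.choose r * (γ * ∏ i ∈ {i : Fin n | (i : ℕ) < r}, (sqSingval X i + γ))) :=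
          mul_le_mul_of_nonneg_left (hν.trans (mul_le_mul_of_nonneg_left he (by positivity)))
            zero_le_two
      _ ≤ 2 * n.choose r * ‖γ * ∏ i ∈ {i : Fin n | (i : ℕ) < r}, (sqSingval X i + γ)‖ := by
          rw [← mul_assoc]; gcongr; exact Real.le_norm_self _
  simpa using hbound.trans ((Asymptotics.isBigO_refl (fun γ : ℝ ↦ γ) _).mul
    ((tendsto_prod_sqSingval_add X _).isBigO_one (F := ℝ)))

end LimitOfMinimizers

theorem convergence_of_global_minimizers_general {n m l : ℕ}
    (L : Matrix (Fin n) (Fin m) ℝ →ₗ[ℝ] (Fin l → ℝ)) (y : Fin l → ℝ)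
    (r : ℕ) (hr : IsLeast {k : ℕ | ∃ X, L X = y ∧ X.rank = k} r)
    (Xγ : ℝ → Matrix (Fin n) (Fin m) ℝ)
    (hmin : ∀ γ : ℝ, 0 < γ →
      L (Xγ γ) = y ∧ ∀ X, L X = y → fgamma γ (Xγ γ) ≤ fgamma γ X)
    (Xbar : Matrix (Fin n) (Fin m) ℝ)
    (hlim : Tendsto Xγ (nhdsWithin 0 (Set.Ioi 0)) (nhds Xbar)) :
    L Xbar = y ∧ Xbar.rank = r ∧
    (∀ X : Matrix (Fin n) (Fin m) ℝ, L X = y → X.rank = r →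
      (∏ i ∈ Finset.univ.filter (fun i : Fin n => (i : ℕ) < r), singval Xbar i)
        ≤ ∏ i ∈ Finset.univ.filter (fun i : Fin n => (i : ℕ) < r), singval X i) ∧
    (∀ hrn : r < n,
      (fun γ : ℝ => (singval (Xγ γ) ⟨r, hrn⟩) ^ 2)
        =O[nhdsWithin 0 (Set.Ioi 0)] (fun γ : ℝ => γ)) := by
  obtain ⟨⟨X₀, hX₀, hX₀r⟩, hr_le⟩ := hr
  have hy : L Xbar = y := tendsto_nhds_unique
    ((L.continuous_of_finiteDimensional.tendsto Xbar).comp hlim)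
    (tendsto_const_nhds.congr' (eventually_nhdsWithin_of_forall fun γ hγ ↦ (hmin γ hγ).1.symm))
  have hZ {X} (hX : L X = y) : ∀ γ, 0 < γ → fgamma γ (Xγ γ) ≤ fgamma γ X :=
    fun γ hγ ↦ (hmin γ hγ).2 X hX
  have hrank : Xbar.rank = r :=
    (rank_limit_le (hZ hX₀) hlim hX₀r).antisymm (hr_le ⟨Xbar, hy, rfl⟩)
  refine ⟨hy, hrank, fun X hX hXr ↦ prod_singval_limit_le (hZ hX) hlim hXr, fun hrn ↦ ?_⟩
  simpa [singval_eq_sqrt_sqSingval, Real.sq_sqrt (sqSingval_nonneg _ _)] using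
    sqSingval_isBigO_of_tendsto (hZ hX₀) hlim hX₀r hrn hrank.ge

/-- Convergence of global minimizers: if `X_γ` globally minimizes `f_γ` over
`L⁻¹(y)` and converges as `γ → 0⁺`, then the limit has minimal rank `r`,
minimizes `∏_{i=1}^r σ_i` among rank-`r` solutions, and
`σ_{r+1}(X_γ)² = O(γ)`. -/
theorem convergence_of_global_minimizers {n m l : ℕ} (hnm : n ≤ m)
    (L : Matrix (Fin n) (Fin m) ℝ →ₗ[ℝ] (Fin l → ℝ)) (y : Fin l → ℝ)
    (r : ℕ) (hr : IsLeast {k : ℕ | ∃ X, L X = y ∧ X.rank = k} r)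
    (Xγ : ℝ → Matrix (Fin n) (Fin m) ℝ)
    (hmin : ∀ γ : ℝ, 0 < γ →
      L (Xγ γ) = y ∧ ∀ X, L X = y → fgamma γ (Xγ γ) ≤ fgamma γ X)
    (Xbar : Matrix (Fin n) (Fin m) ℝ)
    (hlim : Tendsto Xγ (nhdsWithin 0 (Set.Ioi 0)) (nhds Xbar)) :
    L Xbar = y ∧ Xbar.rank = r ∧
    (∀ X : Matrix (Fin n) (Fin m) ℝ, L X = y → X.rank = r →
      (∏ i ∈ Finset.univ.filter (fun i : Fin n => (i : ℕ) < r), singval Xbar i)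
        ≤ ∏ i ∈ Finset.univ.filter (fun i : Fin n => (i : ℕ) < r), singval X i) ∧
    (∀ hrn : r < n,
      (fun γ : ℝ => (singval (Xγ γ) ⟨r, hrn⟩) ^ 2)
        =O[nhdsWithin 0 (Set.Ioi 0)] (fun γ : ℝ => γ)) :=
  convergence_of_global_minimizers_general L y r hr Xγ hmin Xbar hlim
end

section
/- For a,b ∈ ℝ and γ ≥ 0, define q₁(a,b) = (a+b)/(1+γ+b²) and q₂(a,b) = (a+b)/(1+γ+a²). Then |q₁(a,b) − q₂(a,b)| ≤ |a − b| for all a,b ∈ ℝ, and q₁(a,b)·q₂(a,b) ∈ (0,1] whenever a + b ≠ 0 (with q₁ = q₂ = 0 iff a + b = 0). -/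
/-- Properties of the IRLS-0 update maps `q₁, q₂` for the 2×2 example:
`|q₁ − q₂| ≤ |a − b|`, `q₁·q₂ ∈ (0,1]` whenever `a + b ≠ 0`, and
`q₁ = 0 ∧ q₂ = 0 ↔ a + b = 0`. -/
theorem irls_update_properties (γ : ℝ) (hγ : 0 ≤ γ) (a b : ℝ) :
    |(a + b) / (1 + γ + b ^ 2) - (a + b) / (1 + γ + a ^ 2)| ≤ |a - b| ∧
    (a + b ≠ 0 →
      0 < ((a + b) / (1 + γ + b ^ 2)) * ((a + b) / (1 + γ + a ^ 2)) ∧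
      ((a + b) / (1 + γ + b ^ 2)) * ((a + b) / (1 + γ + a ^ 2)) ≤ 1) ∧
    ((a + b) / (1 + γ + b ^ 2) = 0 ∧ (a + b) / (1 + γ + a ^ 2) = 0 ↔ a + b = 0) := by
  have hD1 : 0 < 1 + γ + b ^ 2 := by nlinarith [sq_nonneg b]
  have hD2 : 0 < 1 + γ + a ^ 2 := by nlinarith [sq_nonneg a]
  have hkey : (a + b) ^ 2 ≤ (1 + γ + b ^ 2) * (1 + γ + a ^ 2) := by
    nlinarith [sq_nonneg (1 - a * b), sq_nonneg (a + b), sq_nonneg (a - b)]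
  have hDD : 0 < (1 + γ + b ^ 2) * (1 + γ + a ^ 2) := mul_pos hD1 hD2
  refine ⟨?_, ?_, ?_⟩
  · rw [div_sub_div _ _ (ne_of_gt hD1) (ne_of_gt hD2), abs_div,
      abs_of_pos hDD, div_le_iff₀ hDD]
    have h0 : (a + b) * (1 + γ + a ^ 2) - (1 + γ + b ^ 2) * (a + b)
        = (a - b) * (a + b) ^ 2 := by ring
    rw [h0, abs_mul, abs_pow, sq_abs]
    exact mul_le_mul_of_nonneg_left hkey (abs_nonneg _)
  · intro hab
    have hsq : 0 < (a + b) ^ 2 := by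
      have := abs_pos.mpr hab
      nlinarith [sq_abs (a + b)]
    constructor
    · rw [div_mul_div_comm, show (a+b)*(a+b) = (a+b)^2 by ring]
      exact div_pos hsq hDD
    · rw [div_mul_div_comm, div_le_one (by positivity)]
      calc (a + b) * (a + b) = (a + b) ^ 2 := by ring
        _ ≤ _ := hkey
  · constructor
    · rintro ⟨h1, _⟩
      exact (div_eq_zero_iff.mp h1).resolve_right (ne_of_gt hD1)
    · intro h
      simp [h]
end

section
/- Let γ = 0 and define q₁(a,b) = (a+b)/(1+b²), q₂(a,b) = (a+b)/(1+a²). If 0 < ab < 1 then |q₁(a,b)| > |a| and |q₂(a,b)| > |b|. -/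
lemma irls_key (a b : ℝ) (h0 : 0 < a * b) (h1 : a * b < 1) :
    |a| < |(a + b) / (1 + b ^ 2)| := by
  have hb2 : (0:ℝ) < 1 + b ^ 2 := by positivity
  rw [abs_div, abs_of_pos hb2, lt_div_iff₀ hb2]
  rcases pos_and_pos_or_neg_and_neg_of_mul_pos h0 with ⟨ha, hb⟩ | ⟨ha, hb⟩
  · rw [abs_of_pos ha, abs_of_pos (by linarith : (0:ℝ) < a + b)]
    nlinarith
  · rw [abs_of_neg ha, abs_of_neg (by linarith : a + b < 0)]
    nlinarith

/-- For the IRLS-0 updates at `γ = 0`, `q₁(a,b) = (a+b)/(1+b²)` and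
`q₂(a,b) = (a+b)/(1+a²)`: if `0 < ab < 1` then `|q₁(a,b)| > |a|` and
`|q₂(a,b)| > |b|`. -/
theorem irls_update_increases (a b : ℝ) (h0 : 0 < a * b) (h1 : a * b < 1) :
    |a| < |(a + b) / (1 + b ^ 2)| ∧ |b| < |(a + b) / (1 + a ^ 2)| := by
  refine ⟨irls_key a b h0 h1, ?_⟩
  have := irls_key b a (by linarith [mul_comm a b]) (by linarith [mul_comm a b])
  simpa [add_comm] using this
end

section
/- Let B(a) := 2a/(2a²+1), γ = 0, q₁(a,b) = N₁(a,b)/D₁(a,b) and q₂(a,b) = N₂(a,b)/D₂(a,b) be the rational IRLS update maps for X(a,b) = [[a,1,a+1],[b+1,b,b+1]], where N₁(a,b) = (4b+4)a³+(−b²+12b+8)a²+(7b²+20b+8)a−b²−2, D₁(a,b) = (10b²+8b+4)a²+(2b²+4)a+10b²+16b+10, N₂(a,b) = (6a+6)b³+(−4a²+18a+7)b²+20ab+4a−4, D₂(a,b) = (10a²+2a+10)b²+(8a²+16)b+4a²+4a+10. If 1 ≤ a and 0 < b ≤ B(a), then a < q₁(a,b) and 0 < q₂(a,b) < B(q₁(a,b)).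 -/
/-- `B(a) = 2a/(2a²+1)`. -/
noncomputable def Bfun (a : ℝ) : ℝ := 2 * a / (2 * a ^ 2 + 1)

/-- Numerator of the first IRLS update map. -/
def N₁ (a b : ℝ) : ℝ :=
  (4 * b + 4) * a ^ 3 + (-b ^ 2 + 12 * b + 8) * a ^ 2
    + (7 * b ^ 2 + 20 * b + 8) * a - b ^ 2 - 2

/-- Denominator of the first IRLS update map. -/
def D₁ (a b : ℝ) : ℝ :=
  (10 * b ^ 2 + 8 * b + 4) * a ^ 2 + (2 * b ^ 2 + 4) * a + 10 * b ^ 2 + 16 * b + 10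

/-- Numerator of the second IRLS update map. -/
def N₂ (a b : ℝ) : ℝ :=
  (6 * a + 6) * b ^ 3 + (-4 * a ^ 2 + 18 * a + 7) * b ^ 2 + 20 * a * b + 4 * a - 4

/-- Denominator of the second IRLS update map. -/
def D₂ (a b : ℝ) : ℝ :=
  (10 * a ^ 2 + 2 * a + 10) * b ^ 2 + (8 * a ^ 2 + 16) * b + 4 * a ^ 2 + 4 * a + 10

set_option maxHeartbeats 4000000
set_option maxRecDepth 4000

lemma tnn {s c h : ℝ} {c₀ : ℝ} (hc₀ : 0 ≤ c₀) (hs : 0 ≤ s) (hc : 0 ≤ c)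
    (hh : 0 ≤ h) {e f g : ℕ} : 0 ≤ c₀ * s ^ e * c ^ f * h ^ g :=
  mul_nonneg (mul_nonneg (mul_nonneg hc₀ (pow_nonneg hs _)) (pow_nonneg hc _))
    (pow_nonneg hh _)

lemma pos_cancel_pow {x t : ℝ} {n : ℕ} (h : 0 < x * t ^ n) (ht : 0 < t) : 0 < x := by
  by_contra hx
  push_neg at hx
  nlinarith [pow_pos ht n]

lemma cert_one (s c h : ℝ) (hs : 0 ≤ s) (hc : 0 ≤ c) (hh : 0 < h) :
    0 < 2 * s ^ 0 * c ^ 0 * h ^ 1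
      + (22 * s ^ 1 * c ^ 0 * h ^ 0 + 16 * s ^ 1 * c ^ 1 * h ^ 0 + 36 * s ^ 2 * c ^ 0 * h ^ 0 + 56 * s ^ 2 * c ^ 1 * h ^ 0 + 20 * s ^ 3 * c ^ 0 * h ^ 0 + 66 * s ^ 3 * c ^ 1 * h ^ 0 + 4 * s ^ 4 * c ^ 0 * h ^ 0 + 36 * s ^ 4 * c ^ 1 * h ^ 0 + 8 * s ^ 5 * c ^ 1 * h ^ 0 + 17 * s ^ 0 * c ^ 1 * h ^ 1 + 39 * s ^ 1 * c ^ 1 * h ^ 1 + 33 * s ^ 2 * c ^ 1 * h ^ 1 + 10 * s ^ 3 * c ^ 1 * h ^ 1) :=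
  add_pos_of_pos_of_nonneg
    (by nlinarith [pow_pos hh 1])
    (add_nonneg (add_nonneg (add_nonneg (add_nonneg (add_nonneg (add_nonneg (add_nonneg (add_nonneg (add_nonneg (add_nonneg (add_nonneg (add_nonneg (tnn (c₀ := (22 : ℝ)) (by norm_num) hs hc hh.le) (tnn (c₀ := (16 : ℝ)) (by norm_num) hs hc hh.le)) (tnn (c₀ := (36 : ℝ)) (by norm_num) hs hc hh.le)) (tnn (c₀ := (56 : ℝ)) (by norm_num) hs hc hh.le)) (tnn (c₀ := (20 : ℝ)) (by norm_num) hs hc hh.le)) (tnn (c₀ := (66 : ℝ)) (by norm_num) hs hc hh.le)) (tnn (c₀ := (4 : ℝ)) (by norm_num) hs hc hh.le)) (tnn (c₀ := (36 : ℝ)) (by norm_num) hs hc hh.le)) (tnn (c₀ := (8 : ℝ)) (by norm_num) hs hc hh.le)) (tnn (c₀ := (17 : ℝ)) (by norm_num) hs hc hh.le)) (tnn (c₀ := (39 : ℝ)) (by norm_num) hs hc hh.le)) (tnn (c₀ := (33 : ℝ)) (by norm_num) hs hc hh.le)) (tnn (c₀ := (10 : ℝ)) (by norm_num) hs hc hh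.le))

lemma cert_two (s c h : ℝ) (hs : 0 ≤ s) (hc : 0 ≤ c) (hh : 0 < h) :
    0 < 132 * s ^ 0 * c ^ 0 * h ^ 1
      + (76 * s ^ 1 * c ^ 0 * h ^ 0 + 4 * s ^ 1 * c ^ 1 * h ^ 0 + 6 * s ^ 1 * c ^ 2 * h ^ 0 + 94 * s ^ 2 * c ^ 2 * h ^ 0 + 4 * s ^ 3 * c ^ 2 * h ^ 0 + 424 * s ^ 4 * c ^ 0 * h ^ 0 + 512 * s ^ 5 * c ^ 0 * h ^ 0 + 192 * s ^ 6 * c ^ 0 * h ^ 0 + 32 * s ^ 7 * c ^ 0 * h ^ 0 + 12 * s ^ 0 * c ^ 2 * h ^ 1 + 568 * s ^ 1 * c ^ 0 * h ^ 1 + 6 * s ^ 1 * c ^ 2 * h ^ 1 + 1344 * s ^ 2 * c ^ 0 * h ^ 1 + 1248 * s ^ 3 * c ^ 0 * h ^ 1 + 400 * s ^ 4 * c ^ 0 * h ^ 1 + 8 * s ^ 4 * c ^ 1 * h ^ 1 + 64 * s ^ 5 * c ^ 0 * h ^ 1 + 111 * s ^ 0 * c ^ 0 * h ^ 2 + 180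 * s ^ 1 * c ^ 0 * h ^ 2) :=
  add_pos_of_pos_of_nonneg
    (by nlinarith [pow_pos hh 1])
    (add_nonneg (add_nonneg (add_nonneg (add_nonneg (add_nonneg (add_nonneg (add_nonneg (add_nonneg (add_nonneg (add_nonneg (add_nonneg (add_nonneg (add_nonneg (add_nonneg (add_nonneg (add_nonneg (add_nonneg (add_nonneg (tnn (c₀ := (76 : ℝ)) (by norm_num) hs hc hh.le) (tnn (c₀ := (4 : ℝ)) (by norm_num) hs hc hh.le)) (tnn (c₀ := (6 : ℝ)) (by norm_num) hs hc hh.le)) (tnn (c₀ := (94 : ℝ)) (by norm_num) hs hc hh.le)) (tnn (c₀ := (4 : ℝ)) (by norm_num) hs hc hh.le)) (tnn (c₀ := (424 : ℝ)) (by norm_num) hs hc hh.le)) (tnn (c₀ := (512 : ℝ)) (by norm_num) hs hc hh.le)) (tnn (c₀ := (192 : ℝ)) (by norm_num) hs hc hh.le)) (tnn (c₀ := (32 : ℝ)) (by norm_num) hs hc hh.le)) (tnn (c₀ := (12 : ℝ)) (by norm_num) hs hc hh.le)) (tnn (c₀ := (568 : ℝ)) (by norm_num) hs hc hh.le)) (tnn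 (c₀ := (6 : ℝ)) (by norm_num) hs hc hh.le)) (tnn (c₀ := (1344 : ℝ)) (by norm_num) hs hc hh.le)) (tnn (c₀ := (1248 : ℝ)) (by norm_num) hs hc hh.le)) (tnn (c₀ := (400 : ℝ)) (by norm_num) hs hc hh.le)) (tnn (c₀ := (8 : ℝ)) (by norm_num) hs hc hh.le)) (tnn (c₀ := (64 : ℝ)) (by norm_num) hs hc hh.le)) (tnn (c₀ := (111 : ℝ)) (by norm_num) hs hc hh.le)) (tnn (c₀ := (180 : ℝ)) (by norm_num) hs hc hh.le))

lemma cert_three (s c h : ℝ) (hs : 0 ≤ s) (hc : 0 ≤ c) (hh : 0 < h) :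
    0 < 4757328 * s ^ 0 * c ^ 0 * h ^ 0
      + (1245726 * s ^ 0 * c ^ 4 * h ^ 0 + 3204 * s ^ 0 * c ^ 8 * h ^ 0 + 67108368 * s ^ 1 * c ^ 1 * h ^ 0 + 23219436 * s ^ 1 * c ^ 2 * h ^ 0 + 9612 * s ^ 1 * c ^ 7 * h ^ 0 + 371221824 * s ^ 2 * c ^ 0 * h ^ 0 + 258395664 * s ^ 2 * c ^ 2 * h ^ 0 + 10836 * s ^ 2 * c ^ 7 * h ^ 0 + 1638 * s ^ 2 * c ^ 8 * h ^ 0 + 936 * s ^ 2 * c ^ 9 * h ^ 0 + 3672692528 * s ^ 3 * c ^ 0 * h ^ 0 + 544620048 * s ^ 3 * c ^ 1 * h ^ 0 + 1792252 * s ^ 3 * c ^ 6 * h ^ 0 + (2168713280/3) * s ^ 4 * c ^ 0 * h ^ 0 + (10504996064/3) * s ^ 4 * c ^ 1 * h ^ 0 + 2295124704 * s ^ 4 * c ^ 2 * h ^ 0 + (5430717712/3) * s ^ 5 * c ^ 3 * h ^ 0 + 6783164 * s ^ 5 * c ^ 5 * h ^ 0 + 612 * s ^ 5 * c ^ 7 *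 h ^ 0 + 1746625616 * s ^ 6 * c ^ 3 * h ^ 0 + 521056 * s ^ 6 * c ^ 5 * h ^ 0 + 655881648 * s ^ 7 * c ^ 3 * h ^ 0 + 22612336 * s ^ 7 * c ^ 4 * h ^ 0 + 1432 * s ^ 7 * c ^ 6 * h ^ 0 + (21517077760/3) * s ^ 8 * c ^ 0 * h ^ 0 + 10730693696 * s ^ 8 * c ^ 1 * h ^ 0 + 38167872 * s ^ 8 * c ^ 4 * h ^ 0 + 608 * s ^ 8 * c ^ 6 * h ^ 0 + 7021925760 * s ^ 9 * c ^ 0 * h ^ 0 + 16676274368 * s ^ 9 * c ^ 1 * h ^ 0 + 23222080 * s ^ 9 * c ^ 4 * h ^ 0 + 3442577792 * s ^ 10 * c ^ 0 * h ^ 0 + 13193764864 * s ^ 10 * c ^ 1 * h ^ 0 + 8703232 * s ^ 10 * c ^ 4 * h ^ 0 + 1357857280 * s ^ 11 * c ^ 0 * h ^ 0 + 7575152768 * s ^ 11 * c ^ 1 * h ^ 0 + 2134080 * s ^ 11 * c ^ 4 * h ^ 0 + 425856768 * s ^ 12 * c ^ 0 * h ^ 0 + 3547219712 * s ^ 12 *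 c ^ 1 * h ^ 0 + 58867712 * s ^ 12 * c ^ 2 * h ^ 0 + 331264 * s ^ 12 * c ^ 4 * h ^ 0 + 104034304 * s ^ 13 * c ^ 0 * h ^ 0 + 1202846208 * s ^ 13 * c ^ 1 * h ^ 0 + 67498496 * s ^ 13 * c ^ 2 * h ^ 0 + 28928 * s ^ 13 * c ^ 4 * h ^ 0 + 19131392 * s ^ 14 * c ^ 0 * h ^ 0 + 273369088 * s ^ 14 * c ^ 1 * h ^ 0 + 26958336 * s ^ 14 * c ^ 2 * h ^ 0 + 1024 * s ^ 14 * c ^ 4 * h ^ 0 + 2497536 * s ^ 15 * c ^ 0 * h ^ 0 + 46870528 * s ^ 15 * c ^ 1 * h ^ 0 + 6587392 * s ^ 15 * c ^ 2 * h ^ 0 + 206848 * s ^ 16 * c ^ 0 * h ^ 0 + 5713920 * s ^ 16 * c ^ 1 * h ^ 0 + 1032192 * s ^ 16 * c ^ 2 * h ^ 0 + 8192 * s ^ 17 * c ^ 0 * h ^ 0 + 442368 * s ^ 17 * c ^ 1 * h ^ 0 + 96256 * s ^ 17 * c ^ 2 * h ^ 0 + 16384 * s ^ 18 * c ^ 1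 * h ^ 0 + 4096 * s ^ 18 * c ^ 2 * h ^ 0 + 7839318 * s ^ 0 * c ^ 3 * h ^ 1 + 172770 * s ^ 0 * c ^ 5 * h ^ 1 + 3204 * s ^ 0 * c ^ 7 * h ^ 1 + 41075320 * s ^ 1 * c ^ 3 * h ^ 1 + 626048 * s ^ 1 * c ^ 5 * h ^ 1 + 309712608 * s ^ 2 * c ^ 0 * h ^ 1 + 116873440 * s ^ 2 * c ^ 3 * h ^ 1 + 1002442 * s ^ 2 * c ^ 5 * h ^ 1 + 1638 * s ^ 2 * c ^ 7 * h ^ 1 + 1872 * s ^ 2 * c ^ 8 * h ^ 1 + 211561672 * s ^ 3 * c ^ 3 * h ^ 1 + 2696956 * s ^ 3 * c ^ 5 * h ^ 1 + (12817924256/3) * s ^ 4 * c ^ 0 * h ^ 1 + 3791726944 * s ^ 4 * c ^ 1 * h ^ 1 + 241334656 * s ^ 4 * c ^ 3 * h ^ 1 + 489350 * s ^ 4 * c ^ 5 * h ^ 1 + (8264000704/3) * s ^ 5 * c ^ 0 * h ^ 1 + (34741256512/3) * s ^ 5 * c ^ 1 * h ^ 1 + 183431992 * s ^ 5 * c ^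 3 * h ^ 1 + 152524 * s ^ 5 * c ^ 5 * h ^ 1 + (16550216384/3) * s ^ 6 * c ^ 0 * h ^ 1 + (64355252416/3) * s ^ 6 * c ^ 1 * h ^ 1 + 70479336 * s ^ 6 * c ^ 3 * h ^ 1 + 20724 * s ^ 6 * c ^ 5 * h ^ 1 + (6615892672/3) * s ^ 7 * c ^ 0 * h ^ 1 + 18064014080 * s ^ 7 * c ^ 1 * h ^ 1 + 1138696 * s ^ 7 * c ^ 4 * h ^ 1 + 9975472352 * s ^ 8 * c ^ 1 * h ^ 1 + 133926528 * s ^ 8 * c ^ 2 * h ^ 1 + 718912 * s ^ 8 * c ^ 4 * h ^ 1 + 4391966400 * s ^ 9 * c ^ 1 * h ^ 1 + 376925760 * s ^ 9 * c ^ 2 * h ^ 1 + 213984 * s ^ 9 * c ^ 4 * h ^ 1 + 1590269760 * s ^ 10 * c ^ 1 * h ^ 1 + 268911360 * s ^ 10 * c ^ 2 * h ^ 1 + 33280 * s ^ 10 * c ^ 4 * h ^ 1 + 293694592 * s ^ 11 * c ^ 1 * h ^ 1 + 119568640 * s ^ 11 * c ^ 2 * h ^ 1 + 2176 * s ^ 11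 * c ^ 4 * h ^ 1 + 36847104 * s ^ 12 * c ^ 2 * h ^ 1 + 7943680 * s ^ 13 * c ^ 2 * h ^ 1 + 1152000 * s ^ 14 * c ^ 2 * h ^ 1 + 101376 * s ^ 15 * c ^ 2 * h ^ 1 + 4096 * s ^ 16 * c ^ 2 * h ^ 1 + 7934772 * s ^ 0 * c ^ 0 * h ^ 2 + 29218548 * s ^ 0 * c ^ 1 * h ^ 2 + 1679100 * s ^ 0 * c ^ 3 * h ^ 2 + 71790868 * s ^ 1 * c ^ 0 * h ^ 2 + 237625948 * s ^ 1 * c ^ 1 * h ^ 2 + 8078108 * s ^ 1 * c ^ 3 * h ^ 2 + 843408080 * s ^ 2 * c ^ 1 * h ^ 2 + 17378412 * s ^ 2 * c ^ 3 * h ^ 2 + 936 * s ^ 2 * c ^ 7 * h ^ 2 + 1794166000 * s ^ 3 * c ^ 1 * h ^ 2 + 17914580 * s ^ 3 * c ^ 3 * h ^ 2 + 2571520304 * s ^ 4 * c ^ 1 * h ^ 2 + 12600284 * s ^ 4 * c ^ 3 * h ^ 2 + (2269663664/3) * s ^ 5 * c ^ 1 * h ^ 2) :=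
  add_pos_of_pos_of_nonneg
    (by norm_num)
    (add_nonneg (add_nonneg (add_nonneg (add_nonneg (add_nonneg (add_nonneg (add_nonneg (add_nonneg (add_nonneg (add_nonneg (add_nonneg (add_nonneg (add_nonneg (add_nonneg (add_nonneg (add_nonneg (add_nonneg (add_nonneg (add_nonneg (add_nonneg (add_nonneg (add_nonneg (add_nonneg (add_nonneg (add_nonneg (add_nonneg (add_nonneg (add_nonneg (add_nonneg (add_nonneg (add_nonneg (add_nonneg (add_nonneg (add_nonneg (add_nonneg (add_nonneg (add_nonneg (add_nonneg (add_nonneg (add_nonneg (add_nonneg (add_nonneg (add_nonneg (add_nonneg (add_nonneg (add_nonneg (add_nonneg (add_nonneg (add_nonneg (add_nonneg (add_nonneg (add_nonneg (add_nonneg (add_nonneg (add_nonneg (add_nonneg (add_nonneg (add_nonneg (add_nonneg (add_nonneg (add_nonneg (add_nonneg (add_nonneg (add_nonneg (add_nonneg (add_nonneg (add_nonneg (add_nonneg (add_nonneg (add_nonneg (add_nonneg (add_nonneg (add_nonneg (add_nonneg (add_nonneg (add_nonneg (add_nonneg (add_nonneg (add_nonneg (add_nonneg (add_nonneg (add_nonneg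 (add_nonneg (add_nonneg (add_nonneg (add_nonneg (add_nonneg (add_nonneg (add_nonneg (add_nonneg (add_nonneg (add_nonneg (add_nonneg (add_nonneg (add_nonneg (add_nonneg (add_nonneg (add_nonneg (add_nonneg (add_nonneg (add_nonneg (add_nonneg (add_nonneg (add_nonneg (add_nonneg (add_nonneg (add_nonneg (add_nonneg (add_nonneg (add_nonneg (add_nonneg (add_nonneg (add_nonneg (add_nonneg (add_nonneg (add_nonneg (add_nonneg (tnn (c₀ := (1245726 : ℝ)) (by norm_num) hs hc hh.le) (tnn (c₀ := (3204 : ℝ)) (by norm_num) hs hc hh.le)) (tnn (c₀ := (67108368 : ℝ)) (by norm_num) hs hc hh.le)) (tnn (c₀ := (23219436 : ℝ)) (by norm_num) hs hc hh.le)) (tnn (c₀ := (9612 : ℝ)) (by norm_num) hs hc hh.le)) (tnn (c₀ := (371221824 : ℝ)) (by norm_num) hs hc hh.le)) (tnn (c₀ := (258395664 : ℝ)) (by norm_num) hs hc hh.le)) (tnn (c₀ := (10836 : ℝ)) (by norm_num) hs hc hh.le)) (tnn (c₀ := (1638 : ℝ)) (by norm_num) hs hc hh.le)) (tnn (c₀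 := (936 : ℝ)) (by norm_num) hs hc hh.le)) (tnn (c₀ := (3672692528 : ℝ)) (by norm_num) hs hc hh.le)) (tnn (c₀ := (544620048 : ℝ)) (by norm_num) hs hc hh.le)) (tnn (c₀ := (1792252 : ℝ)) (by norm_num) hs hc hh.le)) (tnn (c₀ := (2168713280/3 : ℝ)) (by norm_num) hs hc hh.le)) (tnn (c₀ := (10504996064/3 : ℝ)) (by norm_num) hs hc hh.le)) (tnn (c₀ := (2295124704 : ℝ)) (by norm_num) hs hc hh.le)) (tnn (c₀ := (5430717712/3 : ℝ)) (by norm_num) hs hc hh.le)) (tnn (c₀ := (6783164 : ℝ)) (by norm_num) hs hc hh.le)) (tnn (c₀ := (612 : ℝ)) (by norm_num) hs hc hh.le)) (tnn (c₀ := (1746625616 : ℝ)) (by norm_num) hs hc hh.le)) (tnn (c₀ := (521056 : ℝ)) (by norm_num) hs hc hh.le)) (tnn (c₀ := (655881648 : ℝ)) (by norm_num) hs hc hh.le)) (tnn (c₀ := (22612336 : ℝ)) (by norm_num) hs hc hh.le)) (tnn (c₀ := (1432 : ℝ)) (by norm_num) hs hc hh.le)) (tnn (c₀ := (21517077760/3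 : ℝ)) (by norm_num) hs hc hh.le)) (tnn (c₀ := (10730693696 : ℝ)) (by norm_num) hs hc hh.le)) (tnn (c₀ := (38167872 : ℝ)) (by norm_num) hs hc hh.le)) (tnn (c₀ := (608 : ℝ)) (by norm_num) hs hc hh.le)) (tnn (c₀ := (7021925760 : ℝ)) (by norm_num) hs hc hh.le)) (tnn (c₀ := (16676274368 : ℝ)) (by norm_num) hs hc hh.le)) (tnn (c₀ := (23222080 : ℝ)) (by norm_num) hs hc hh.le)) (tnn (c₀ := (3442577792 : ℝ)) (by norm_num) hs hc hh.le)) (tnn (c₀ := (13193764864 : ℝ)) (by norm_num) hs hc hh.le)) (tnn (c₀ := (8703232 : ℝ)) (by norm_num) hs hc hh.le)) (tnn (c₀ := (1357857280 : ℝ)) (by norm_num) hs hc hh.le)) (tnn (c₀ := (7575152768 : ℝ)) (by norm_num) hs hc hh.le)) (tnn (c₀ := (2134080 : ℝ)) (by norm_num) hs hc hh.le)) (tnn (c₀ := (425856768 : ℝ)) (by norm_num) hs hc hh.le)) (tnn (c₀ := (3547219712 : ℝ)) (by norm_num) hs hc hh.le)) (tnn (c₀ := (58867712 : ℝ)) (by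 norm_num) hs hc hh.le)) (tnn (c₀ := (331264 : ℝ)) (by norm_num) hs hc hh.le)) (tnn (c₀ := (104034304 : ℝ)) (by norm_num) hs hc hh.le)) (tnn (c₀ := (1202846208 : ℝ)) (by norm_num) hs hc hh.le)) (tnn (c₀ := (67498496 : ℝ)) (by norm_num) hs hc hh.le)) (tnn (c₀ := (28928 : ℝ)) (by norm_num) hs hc hh.le)) (tnn (c₀ := (19131392 : ℝ)) (by norm_num) hs hc hh.le)) (tnn (c₀ := (273369088 : ℝ)) (by norm_num) hs hc hh.le)) (tnn (c₀ := (26958336 : ℝ)) (by norm_num) hs hc hh.le)) (tnn (c₀ := (1024 : ℝ)) (by norm_num) hs hc hh.le)) (tnn (c₀ := (2497536 : ℝ)) (by norm_num) hs hc hh.le)) (tnn (c₀ := (46870528 : ℝ)) (by norm_num) hs hc hh.le)) (tnn (c₀ := (6587392 : ℝ)) (by norm_num) hs hc hh.le)) (tnn (c₀ := (206848 : ℝ)) (by norm_num) hs hc hh.le)) (tnn (c₀ := (5713920 : ℝ)) (by norm_num) hs hc hh.le)) (tnn (c₀ := (1032192 : ℝ)) (by norm_num) hs hc hh.le)) (tnn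 (c₀ := (8192 : ℝ)) (by norm_num) hs hc hh.le)) (tnn (c₀ := (442368 : ℝ)) (by norm_num) hs hc hh.le)) (tnn (c₀ := (96256 : ℝ)) (by norm_num) hs hc hh.le)) (tnn (c₀ := (16384 : ℝ)) (by norm_num) hs hc hh.le)) (tnn (c₀ := (4096 : ℝ)) (by norm_num) hs hc hh.le)) (tnn (c₀ := (7839318 : ℝ)) (by norm_num) hs hc hh.le)) (tnn (c₀ := (172770 : ℝ)) (by norm_num) hs hc hh.le)) (tnn (c₀ := (3204 : ℝ)) (by norm_num) hs hc hh.le)) (tnn (c₀ := (41075320 : ℝ)) (by norm_num) hs hc hh.le)) (tnn (c₀ := (626048 : ℝ)) (by norm_num) hs hc hh.le)) (tnn (c₀ := (309712608 : ℝ)) (by norm_num) hs hc hh.le)) (tnn (c₀ := (116873440 : ℝ)) (by norm_num) hs hc hh.le)) (tnn (c₀ := (1002442 : ℝ)) (by norm_num) hs hc hh.le)) (tnn (c₀ := (1638 : ℝ)) (by norm_num) hs hc hh.le)) (tnn (c₀ := (1872 : ℝ)) (by norm_num) hs hc hh.le)) (tnn (c₀ := (211561672 : ℝ)) (by norm_num)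 hs hc hh.le)) (tnn (c₀ := (2696956 : ℝ)) (by norm_num) hs hc hh.le)) (tnn (c₀ := (12817924256/3 : ℝ)) (by norm_num) hs hc hh.le)) (tnn (c₀ := (3791726944 : ℝ)) (by norm_num) hs hc hh.le)) (tnn (c₀ := (241334656 : ℝ)) (by norm_num) hs hc hh.le)) (tnn (c₀ := (489350 : ℝ)) (by norm_num) hs hc hh.le)) (tnn (c₀ := (8264000704/3 : ℝ)) (by norm_num) hs hc hh.le)) (tnn (c₀ := (34741256512/3 : ℝ)) (by norm_num) hs hc hh.le)) (tnn (c₀ := (183431992 : ℝ)) (by norm_num) hs hc hh.le)) (tnn (c₀ := (152524 : ℝ)) (by norm_num) hs hc hh.le)) (tnn (c₀ := (16550216384/3 : ℝ)) (by norm_num) hs hc hh.le)) (tnn (c₀ := (64355252416/3 : ℝ)) (by norm_num) hs hc hh.le)) (tnn (c₀ := (70479336 : ℝ)) (by norm_num) hs hc hh.le)) (tnn (c₀ := (20724 : ℝ)) (by norm_num) hs hc hh.le)) (tnn (c₀ := (6615892672/3 : ℝ)) (by norm_num) hs hc hh.le)) (tnn (c₀ := (18064014080 : ℝ)) (by norm_num)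 hs hc hh.le)) (tnn (c₀ := (1138696 : ℝ)) (by norm_num) hs hc hh.le)) (tnn (c₀ := (9975472352 : ℝ)) (by norm_num) hs hc hh.le)) (tnn (c₀ := (133926528 : ℝ)) (by norm_num) hs hc hh.le)) (tnn (c₀ := (718912 : ℝ)) (by norm_num) hs hc hh.le)) (tnn (c₀ := (4391966400 : ℝ)) (by norm_num) hs hc hh.le)) (tnn (c₀ := (376925760 : ℝ)) (by norm_num) hs hc hh.le)) (tnn (c₀ := (213984 : ℝ)) (by norm_num) hs hc hh.le)) (tnn (c₀ := (1590269760 : ℝ)) (by norm_num) hs hc hh.le)) (tnn (c₀ := (268911360 : ℝ)) (by norm_num) hs hc hh.le)) (tnn (c₀ := (33280 : ℝ)) (by norm_num) hs hc hh.le)) (tnn (c₀ := (293694592 : ℝ)) (by norm_num) hs hc hh.le)) (tnn (c₀ := (119568640 : ℝ)) (by norm_num) hs hc hh.le)) (tnn (c₀ := (2176 : ℝ)) (by norm_num) hs hc hh.le)) (tnn (c₀ := (36847104 : ℝ)) (by norm_num) hs hc hh.le)) (tnn (c₀ := (7943680 : ℝ)) (by norm_num) hs hc hh.le)) (tnn (c₀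 := (1152000 : ℝ)) (by norm_num) hs hc hh.le)) (tnn (c₀ := (101376 : ℝ)) (by norm_num) hs hc hh.le)) (tnn (c₀ := (4096 : ℝ)) (by norm_num) hs hc hh.le)) (tnn (c₀ := (7934772 : ℝ)) (by norm_num) hs hc hh.le)) (tnn (c₀ := (29218548 : ℝ)) (by norm_num) hs hc hh.le)) (tnn (c₀ := (1679100 : ℝ)) (by norm_num) hs hc hh.le)) (tnn (c₀ := (71790868 : ℝ)) (by norm_num) hs hc hh.le)) (tnn (c₀ := (237625948 : ℝ)) (by norm_num) hs hc hh.le)) (tnn (c₀ := (8078108 : ℝ)) (by norm_num) hs hc hh.le)) (tnn (c₀ := (843408080 : ℝ)) (by norm_num) hs hc hh.le)) (tnn (c₀ := (17378412 : ℝ)) (by norm_num) hs hc hh.le)) (tnn (c₀ := (936 : ℝ)) (by norm_num) hs hc hh.le)) (tnn (c₀ := (1794166000 : ℝ)) (by norm_num) hs hc hh.le)) (tnn (c₀ := (17914580 : ℝ)) (by norm_num) hs hc hh.le)) (tnn (c₀ := (2571520304 : ℝ)) (by norm_num) hs hc hh.le)) (tnn (c₀ := (12600284 : ℝ)) (by norm_num)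 hs hc hh.le)) (tnn (c₀ := (2269663664/3 : ℝ)) (by norm_num) hs hc hh.le))

set_option maxHeartbeats 1000000 in
/-- Invariance of the region `1 ≤ a`, `0 < b ≤ B(a)` under the IRLS-0 update
maps `q₁ = N₁/D₁`, `q₂ = N₂/D₂`: then `a < q₁(a,b)` and
`0 < q₂(a,b) < B(q₁(a,b))`. -/
theorem irls_divergence_invariance (a b : ℝ) (ha : 1 ≤ a) (hb : 0 < b)
    (hbB : b ≤ Bfun a) :
    a < N₁ a b / D₁ a b ∧
    0 < N₂ a b / D₂ a b ∧
    N₂ a b / D₂ a b < Bfun (N₁ a b / D₁ a b) := by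
  have ht : (0:ℝ) < 2 * a ^ 2 + 1 := by positivity
  have hs : (0:ℝ) ≤ a - 1 := by linarith
  have hh : (0:ℝ) < b * (2 * a ^ 2 + 1) := mul_pos hb ht
  have hc : (0:ℝ) ≤ 2 * a - b * (2 * a ^ 2 + 1) := by
    have h2 : b * (2 * a ^ 2 + 1) ≤ 2 * a := by
      rw [Bfun] at hbB
      exact (le_div_iff₀ ht).mp hbB
    linarith
  have hD1 : (0:ℝ) < D₁ a b := by
    simp only [D₁]; nlinarith [mul_pos hb hb, sq_nonneg a, sq_nonneg b]
  have hD2 : (0:ℝ) < D₂ a b := by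
    simp only [D₂]; nlinarith [mul_pos hb hb, sq_nonneg a, sq_nonneg b]
  have p1 : (0:ℝ) < N₁ a b - a * D₁ a b := by
    have h := cert_one (a - 1) (2 * a - b * (2 * a ^ 2 + 1)) (b * (2 * a ^ 2 + 1)) hs hc hh
    have h' : (0:ℝ) < (N₁ a b - a * D₁ a b) * (2 * a ^ 2 + 1) ^ 2 := by
      convert h using 1
      simp only [N₁, D₁]; ring
    exact pos_cancel_pow h' ht
  have p2 : (0:ℝ) < N₂ a b := by
    have h := cert_two (a - 1) (2 * a - b * (2 * a ^ 2 + 1)) (b * (2 * a ^ 2 + 1)) hs hc hh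
    have h' : (0:ℝ) < N₂ a b * (2 * a ^ 2 + 1) ^ 3 := by
      convert h using 1
      simp only [N₂]; ring
    exact pos_cancel_pow h' ht
  have p3 : (0:ℝ) < 2 * N₁ a b * D₁ a b * D₂ a b
      - N₂ a b * (2 * (N₁ a b) ^ 2 + (D₁ a b) ^ 2) := by
    have h := cert_three (a - 1) (2 * a - b * (2 * a ^ 2 + 1)) (b * (2 * a ^ 2 + 1)) hs hc hh
    have h' : (0:ℝ) < (2 * N₁ a b * D₁ a b * D₂ a b
        - N₂ a b * (2 * (N₁ a b) ^ 2 + (D₁ a b) ^ 2)) * (2 * a ^ 2 + 1) ^ 7 := by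
      convert h using 1
      simp only [N₁, D₁, N₂, D₂]; ring
    exact pos_cancel_pow h' ht
  have hQ : (0:ℝ) < 2 * (N₁ a b) ^ 2 + (D₁ a b) ^ 2 := by
    nlinarith [sq_nonneg (N₁ a b), pow_pos hD1 2]
  refine ⟨?_, div_pos p2 hD2, ?_⟩
  · rw [lt_div_iff₀ hD1]
    linarith
  · have hBeq : Bfun (N₁ a b / D₁ a b)
        = 2 * N₁ a b * D₁ a b / (2 * (N₁ a b) ^ 2 + (D₁ a b) ^ 2) := by
      rw [Bfun]
      rw [div_eq_div_iff (by positivity) hQ.ne']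
      field_simp
    rw [hBeq, div_lt_div_iff₀ hD2 hQ]
    linarith
end
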